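/- arXiv:0902.3480 — 4 statements merged into one kernel-verified Lean document; each statement's English description precedes it below -/
import Mathlib

section
/- Let k be a field of characteristic ≠ 2 and let h(x) = x^4 + bx^2 + d be a polynomial over k with distinct roots. Then h is irreducible over k if and only if none of the following are squares in k (the latter two interpreted in k(√d)): (i) b^2 - 4d in k, (ii) -b + 2√d, (iii) -b - 2√d. -/
/-!
A monic quartic is reducible exactly when it has a root or is a product of two monic quadratics.
For `x⁴ + b x² + d`, a root `x` makes `b² - 4d = (2x² + b)²`, and comparing coefficients in
`(x² + p x + q)(x² - p x + s)` forces either `p = 0`, so `b² - 4d = (q - s)²`, or `s = q`, so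
`q² = d` and `p² = -b + 2q`: then `δ = ±q` and `-b ± 2δ` is the square of `p ∈ k`.
Conversely, a square root `u + vδ` of `-b + 2δ` in `k(δ)` gives `u² + v²d + b = 2(1 - uv)δ`,
so either `δ ∈ k`, or `uv = 1` and `u` is a root of the quartic.
-/

open Polynomial

namespace Polynomial

variable {k : Type*} [Field k]

theorem IsMonicOfDegree.not_irreducible_iff_root_or_quadratic_factors {f : k[X]}
    (hf : IsMonicOfDegree f 4) :
    ¬ Irreducible f ↔
      (∃ x, f.IsRoot x) ∨
        ∃ a b c e : k, f = (X ^ 2 + C a * X + C b) * (X ^ 2 + C c * X + C e) := by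
  constructor
  · intro hred
    have hf1 : f ≠ 1 := by
      rintro rfl
      simpa using hf.natDegree_eq
    rw [hf.monic.irreducible_iff_natDegree', hf.natDegree_eq] at hred
    simp only [hf1, ne_eq, not_false_eq_true, true_and, not_forall, not_not] at hred
    obtain ⟨g₁, g₂, -, hg₂, rfl, hdeg⟩ := hred
    obtain hdeg | hdeg : g₂.natDegree = 1 ∨ g₂.natDegree = 2 := by
      rw [Finset.mem_Ioc] at hdeg; omega
    · obtain ⟨r, rfl⟩ := isMonicOfDegree_one_iff.mp ⟨hdeg, hg₂⟩
      exact Or.inl ⟨-r, by simp⟩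
    · have hg₂' : IsMonicOfDegree g₂ 2 := ⟨hdeg, hg₂⟩
      obtain ⟨a, b, rfl⟩ := isMonicOfDegree_two_iff.mp (hg₂'.of_mul_right (m := 2) hf)
      obtain ⟨c, e, rfl⟩ := isMonicOfDegree_two_iff.mp hg₂'
      exact Or.inr ⟨a, b, c, e, rfl⟩
  · rintro (⟨x, hx⟩ | ⟨a, b, c, e, rfl⟩) hirr
    · have := natDegree_eq_of_degree_eq_some (degree_eq_one_of_irreducible_of_root hirr hx)
      rw [hf.natDegree_eq] at this
      norm_num at this
    · rcases hirr.isUnit_or_isUnit rfl with hu | hu <;>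
        simpa [(isMonicOfDegree_add_add_two _ _).natDegree_eq] using natDegree_eq_zero_of_isUnit hu

end Polynomial

section

variable {k : Type*} [Field k] {b d : k}

theorem isSquare_discrim_of_biquadratic_root {x : k} (hx : x ^ 4 + b * x ^ 2 + d = 0) :
    IsSquare (b ^ 2 - 4 * d) :=
  ⟨2 * x ^ 2 + b, by linear_combination (-4) * hx⟩

theorem biquadratic_eq_quadratic_mul_quadratic_iff {p q r s : k} :
    (X ^ 4 + C b * X ^ 2 + C d : k[X]) = (X ^ 2 + C p * X + C q) * (X ^ 2 + C r * X + C s) ↔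
      p + r = 0 ∧ q + s + p * r = b ∧ p * s + q * r = 0 ∧ q * s = d := by
  have hexpand : (X ^ 2 + C p * X + C q) * (X ^ 2 + C r * X + C s) =
      X ^ 4 + C (p + r) * X ^ 3 + C (q + s + p * r) * X ^ 2 + C (p * s + q * r) * X
        + C (q * s) := by
    simp only [map_add, map_mul]; ring
  rw [hexpand]
  constructor
  · intro h
    have hcoeff (n : ℕ) := congrArg (coeff · n) h
    refine ⟨?_, ?_, ?_, ?_⟩ <;>
      [have := hcoeff 3; have := hcoeff 2; have := hcoeff 1; have := hcoeff 0] <;>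
      simpa [-map_add, -map_mul, coeff_X_pow, coeff_C] using this.symm
  · rintro ⟨h3, h2, h1, h0⟩
    simp [h3, h2, h1, h0]

theorem biquadratic_not_irreducible_iff (h2 : (2 : k) ≠ 0) :
    ¬ Irreducible (X ^ 4 + C b * X ^ 2 + C d : k[X]) ↔
      IsSquare (b ^ 2 - 4 * d) ∨ ∃ p q : k, q ^ 2 = d ∧ p ^ 2 = -b + 2 * q := by
  have hdeg : IsMonicOfDegree (X ^ 4 + C b * X ^ 2 + C d : k[X]) 4 :=
    ⟨by compute_degree!, by monicity!⟩
  simp_rw [hdeg.not_irreducible_iff_root_or_quadratic_factors,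
    biquadratic_eq_quadratic_mul_quadratic_iff]
  constructor
  · rintro (⟨x, hx⟩ | ⟨p, q, r, s, h3, h2, h1, h0⟩)
    · exact Or.inl (isSquare_discrim_of_biquadratic_root (by simpa using hx))
    · obtain rfl : r = -p := by linear_combination h3
      obtain rfl | hsq : p = 0 ∨ s - q = 0 := mul_eq_zero.mp (by linear_combination h1)
      · exact Or.inl ⟨q - s, by linear_combination (-(b + q + s)) * h2 + 4 * h0⟩
      · obtain rfl : s = q := by linear_combination hsq
        exact Or.inr ⟨p, s, by linear_combination h0, by linear_combination -h2⟩
  · rintro (⟨e, he⟩ | ⟨p, q, hq, hp⟩)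
    · refine Or.inr ⟨0, (b - e) / 2, 0, (b + e) / 2, by ring, ?_, by ring, ?_⟩
      · field_simp; ring
      · field_simp; linear_combination he
    · exact Or.inr ⟨p, q, -p, q, by ring, by linear_combination -hp, by ring,
        by linear_combination hq⟩

variable {K : Type*} [Field K] [Algebra k K]

theorem exists_eq_add_mul_of_mem_adjoin_of_sq_eq {δ : K} (hδ : δ ^ 2 = algebraMap k K d) {y : K}
    (hy : y ∈ IntermediateField.adjoin k {δ}) :
    ∃ u v : k, y = algebraMap k K u + algebraMap k K v * δ := by
  have hm : (X ^ 2 - C d).Monic := monic_X_pow_sub_C d two_ne_zero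
  have hroot : aeval δ (X ^ 2 - C d) = 0 := by simp [hδ]
  have hint : IsIntegral k δ := ⟨_, hm, hroot⟩
  rw [← IntermediateField.mem_toSubalgebra,
    IntermediateField.adjoin_simple_toSubalgebra_of_isAlgebraic hint.isAlgebraic,
    Algebra.adjoin_singleton_eq_range_aeval] at hy
  obtain ⟨P, rfl⟩ := hy
  have hlin : (P %ₘ (X ^ 2 - C d)).natDegree ≤ 1 := by
    have := natDegree_modByMonic_lt P hm (fun h => by simpa using congrArg natDegree h)
    rw [natDegree_X_pow_sub_C] at this
    omega
  obtain ⟨v, u, hP⟩ := exists_eq_X_add_C_of_natDegree_le_one hlin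
  refine ⟨u, v, ?_⟩
  change aeval δ P = _
  rw [← aeval_modByMonic_eq_self_of_root hroot, hP]
  simp only [map_add, map_mul, aeval_C, aeval_X]
  ring

theorem isSquare_discrim_or_exists_of_sq_eq (h2 : (2 : k) ≠ 0) {δ : K}
    (hδ : δ ^ 2 = algebraMap k K d) {u v : k}
    (hy : (algebraMap k K u + algebraMap k K v * δ) ^ 2 = -algebraMap k K b + 2 * δ) :
    IsSquare (b ^ 2 - 4 * d) ∨ ∃ p q : k, q ^ 2 = d ∧ p ^ 2 = -b + 2 * q := by
  set φ := algebraMap k K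
  have hφ : Function.Injective φ := φ.injective
  have hlin : φ (u ^ 2 + v ^ 2 * d + b) = φ (2 - 2 * u * v) * δ := by
    simp only [map_add, map_sub, map_mul, map_pow, map_ofNat]
    linear_combination hy - φ v ^ 2 * hδ
  by_cases huv : u * v = 1
  · have hu : u ^ 2 + v ^ 2 * d + b = 0 := hφ (by simp [hlin, mul_assoc, huv])
    exact Or.inl (isSquare_discrim_of_biquadratic_root (x := u)
      (by linear_combination u ^ 2 * hu - d * (u * v + 1) * huv))
  · have hc : φ (2 - 2 * u * v) ≠ 0 := by
      rw [_root_.map_ne_zero, mul_assoc, ← mul_one_sub]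
      exact mul_ne_zero h2 (sub_ne_zero.mpr (Ne.symm huv))
    set c := (u ^ 2 + v ^ 2 * d + b) / (2 - 2 * u * v)
    have hδc : δ = φ c := by rw [map_div₀, eq_div_iff hc, hlin, mul_comm]
    subst hδc
    refine Or.inr ⟨u + v * c, c, hφ (by rw [map_pow, hδ]), hφ ?_⟩
    simpa only [map_add, map_mul, map_pow, map_neg, map_ofNat] using hy

theorem isSquare_discrim_or_exists_iff_exists_mem_adjoin (h2 : (2 : k) ≠ 0) {δ : K}
    (hδ : δ ^ 2 = algebraMap k K d) :
    (IsSquare (b ^ 2 - 4 * d) ∨ ∃ p q : k, q ^ 2 = d ∧ p ^ 2 = -b + 2 * q) ↔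
      IsSquare (b ^ 2 - 4 * d) ∨
        (∃ y ∈ IntermediateField.adjoin k {δ}, y ^ 2 = -algebraMap k K b + 2 * δ) ∨
        (∃ y ∈ IntermediateField.adjoin k {δ}, y ^ 2 = -algebraMap k K b - 2 * δ) := by
  set φ := algebraMap k K
  constructor
  · rintro (hS | ⟨p, q, hq, hp⟩)
    · exact Or.inl hS
    have hp' : φ p ^ 2 = -φ b + 2 * φ q := by
      rw [← map_pow, hp]; simp only [map_add, map_neg, map_mul, map_ofNat]
    obtain hδq | hδq : δ - φ q = 0 ∨ δ + φ q = 0 :=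
      mul_eq_zero.mp (by linear_combination hδ - congrArg φ hq + map_pow φ q 2)
    · exact Or.inr (Or.inl ⟨φ p, IntermediateField.algebraMap_mem _ p,
        by linear_combination hp' - 2 * hδq⟩)
    · exact Or.inr (Or.inr ⟨φ p, IntermediateField.algebraMap_mem _ p,
        by linear_combination hp' + 2 * hδq⟩)
  · rintro (hS | ⟨y, hy, hy2⟩ | ⟨y, hy, hy2⟩)
    · exact Or.inl hS
    · obtain ⟨u, v, rfl⟩ := exists_eq_add_mul_of_mem_adjoin_of_sq_eq hδ hy
      exact isSquare_discrim_or_exists_of_sq_eq h2 hδ hy2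
    · obtain ⟨u, v, rfl⟩ := exists_eq_add_mul_of_mem_adjoin_of_sq_eq hδ hy
      have hy2' : (φ u + φ (-v) * -δ) ^ 2 = -φ b + 2 * -δ := by
        rw [map_neg]; linear_combination hy2
      exact isSquare_discrim_or_exists_of_sq_eq h2 (by rw [neg_sq, hδ]) hy2'

end

theorem biquadratic_irreducible_iff_kappe_warren_general
    {k : Type*} [Field k] (h2 : (2 : k) ≠ 0) (b d : k)
    (δ : AlgebraicClosure k) (hδ : δ ^ 2 = algebraMap k (AlgebraicClosure k) d) :
    Irreducible (X ^ 4 + C b * X ^ 2 + C d : k[X]) ↔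
      (¬ IsSquare (b ^ 2 - 4 * d) ∧
        ¬ (∃ y ∈ IntermediateField.adjoin k ({δ} : Set (AlgebraicClosure k)),
            y ^ 2 = -(algebraMap k (AlgebraicClosure k) b) + 2 * δ) ∧
        ¬ (∃ y ∈ IntermediateField.adjoin k ({δ} : Set (AlgebraicClosure k)),
            y ^ 2 = -(algebraMap k (AlgebraicClosure k) b) - 2 * δ)) := by
  rw [← not_not (a := Irreducible _), biquadratic_not_irreducible_iff h2,
    isSquare_discrim_or_exists_iff_exists_mem_adjoin h2 hδ]
  simp only [not_or]

/-- Kappe–Warren criterion: let `k` be a field of characteristic ≠ 2 and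
`h(x) = x⁴ + bx² + d` a squarefree polynomial over `k`.  Fix a square root `δ` of `d`
in an algebraic closure of `k`.  Then `h` is irreducible over `k` if and only if none
of the following is a square: `b² − 4d` in `k`, and `−b + 2δ`, `−b − 2δ` in `k(δ)`. -/
theorem biquadratic_irreducible_iff_kappe_warren
    {k : Type*} [Field k] (h2 : (2 : k) ≠ 0) (b d : k)
    (hsf : Squarefree (X ^ 4 + C b * X ^ 2 + C d : k[X]))
    (δ : AlgebraicClosure k) (hδ : δ ^ 2 = algebraMap k (AlgebraicClosure k) d) :
    Irreducible (X ^ 4 + C b * X ^ 2 + C d : k[X]) ↔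
      (¬ IsSquare (b ^ 2 - 4 * d) ∧
        ¬ (∃ y ∈ IntermediateField.adjoin k ({δ} : Set (AlgebraicClosure k)),
            y ^ 2 = -(algebraMap k (AlgebraicClosure k) b) + 2 * δ) ∧
        ¬ (∃ y ∈ IntermediateField.adjoin k ({δ} : Set (AlgebraicClosure k)),
            y ^ 2 = -(algebraMap k (AlgebraicClosure k) b) - 2 * δ)) :=
  biquadratic_irreducible_iff_kappe_warren_general h2 b d δ hδ
end

section
/- The subgroup S̃_3 = ⟨(1 3 5)(2 4 6), (1 2)(3 6)(4 5)⟩ of S_6 is isomorphic to S_3 and fixes exactly the three partitions {{1,2},{3,4},{5,6}}, {{1,4},{2,5},{3,6}}, {{1,6},{2,3},{4,5}} among all 15 partitions of {1,...,6} into three disjoint unordered pairs. -/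
open scoped Pointwise Classical

set_option maxRecDepth 8000

/-- A partition of `{1,...,6}` (modeled as `Fin 6`) into three pairwise disjoint
unordered pairs. -/
def IsPairPartition (P : Finset (Finset (Fin 6))) : Prop :=
  P.card = 3 ∧ (∀ p ∈ P, p.card = 2) ∧
    (∀ p ∈ P, ∀ q ∈ P, p ≠ q → Disjoint p q) ∧
    P.sup id = Finset.univ

/-- The subgroup `S̃₃ = ⟨(1 3 5)(2 4 6), (1 2)(3 6)(4 5)⟩` of `S₆` (0-indexed:
`⟨(0 2 4)(1 3 5), (0 1)(2 5)(3 4)⟩`). -/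
def Stilde3 : Subgroup (Equiv.Perm (Fin 6)) :=
  Subgroup.closure {c[0, 2, 4] * c[1, 3, 5], c[0, 1] * c[2, 5] * c[3, 4]}

private def aperm : Equiv.Perm (Fin 6) := c[0, 2, 4] * c[1, 3, 5]
private def bperm : Equiv.Perm (Fin 6) := c[0, 1] * c[2, 5] * c[3, 4]
private def sperm : Equiv.Perm (Fin 3) := c[0, 1, 2]
private def tperm : Equiv.Perm (Fin 3) := c[0, 1]

private def f0 : Equiv.Perm (Fin 3) → Equiv.Perm (Fin 6) := fun σ =>
  if σ = 1 then 1 else if σ = sperm then aperm else if σ = sperm * sperm then aperm * aperm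
  else if σ = tperm then bperm else if σ = sperm * tperm then aperm * bperm
  else aperm * aperm * bperm

private def f : Equiv.Perm (Fin 3) →* Equiv.Perm (Fin 6) :=
  MonoidHom.mk' f0 (by decide)

private lemma closure_st : Subgroup.closure ({sperm, tperm} : Set (Equiv.Perm (Fin 3))) = ⊤ := by
  rw [eq_top_iff]
  intro σ _
  have hs : sperm ∈ Subgroup.closure ({sperm, tperm} : Set (Equiv.Perm (Fin 3))) :=
    Subgroup.subset_closure (Set.mem_insert _ _)
  have ht : tperm ∈ Subgroup.closure ({sperm, tperm} : Set (Equiv.Perm (Fin 3))) :=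
    Subgroup.subset_closure (Set.mem_insert_of_mem _ rfl)
  have key : ∀ σ : Equiv.Perm (Fin 3), σ = 1 ∨ σ = sperm ∨ σ = sperm*sperm ∨ σ = tperm ∨
      σ = sperm*tperm ∨ σ = sperm*sperm*tperm := by decide
  rcases key σ with h|h|h|h|h|h <;> subst h
  · exact one_mem _
  · exact hs
  · exact mul_mem hs hs
  · exact ht
  · exact mul_mem hs ht
  · exact mul_mem (mul_mem hs hs) ht

private lemma range_f : f.range = Stilde3 := by
  rw [MonoidHom.range_eq_map, ← closure_st, MonoidHom.map_closure, Stilde3]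
  congr 1
  rw [Set.image_insert_eq, Set.image_singleton]
  have h1 : f sperm = aperm := by decide
  have h2 : f tperm = bperm := by decide
  rw [h1, h2]
  rfl

private noncomputable def isoPart : Stilde3 ≃* Equiv.Perm (Fin 3) :=
  ((MonoidHom.ofInjective (by decide : Function.Injective f)).trans
    (MulEquiv.subgroupCongr range_f)).symm

private lemma fixed_of_gen (Q : Finset (Finset (Fin 6))) (ha : aperm • Q = Q)
    (hb : bperm • Q = Q) : ∀ σ ∈ Stilde3, σ • Q = Q := by
  intro σ hσ
  have hle : Stilde3 ≤ MulAction.stabilizer (Equiv.Perm (Fin 6)) Q := by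
    rw [Stilde3, Subgroup.closure_le]
    intro g hg
    rcases hg with rfl | rfl
    · exact ha
    · exact hb
  exact hle hσ

private lemma mem_a : aperm ∈ Stilde3 := Subgroup.subset_closure (Set.mem_insert _ _)

private lemma pair_smul (σ : Equiv.Perm (Fin 6)) (u v : Fin 6) :
    σ • ({u, v} : Finset (Fin 6)) = {σ u, σ v} := by
  simp [Finset.smul_finset_insert, Finset.smul_finset_singleton, Equiv.Perm.smul_def]

private lemma forward (P : Finset (Finset (Fin 6))) (hP : IsPairPartition P)
    (hinv : ∀ σ ∈ Stilde3, σ • P = P) :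
    P = {{0,1},{2,3},{4,5}} ∨ P = {{0,3},{1,4},{2,5}} ∨ P = {{0,5},{1,2},{3,4}} := by
  obtain ⟨hcard, hpairs, hdisj, hsup⟩ := hP
  have ha : aperm • P = P := hinv aperm mem_a
  have step : ∀ q ∈ P, aperm • q ∈ P := fun q hq => ha ▸ Finset.smul_mem_smul_finset hq
  have h0 : ∃ p ∈ P, (0:Fin 6) ∈ p := by
    have h := Finset.mem_univ (0 : Fin 6)
    rw [← hsup, Finset.mem_sup] at h
    simpa using h
  obtain ⟨p, hpP, h0p⟩ := h0
  obtain ⟨x, y, hxy, hpxy⟩ := Finset.card_eq_two.mp (hpairs p hpP)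
  subst hpxy
  have hk : ∃ k : Fin 6, k ≠ 0 ∧ ({0, k} : Finset (Fin 6)) ∈ P := by
    simp only [Finset.mem_insert, Finset.mem_singleton] at h0p
    rcases h0p with rfl | rfl
    · exact ⟨y, Ne.symm hxy, hpP⟩
    · exact ⟨x, hxy, by rwa [Finset.pair_comm]⟩
  obtain ⟨k, hk0, h1⟩ := hk
  have h2 : ({2, aperm k} : Finset (Fin 6)) ∈ P := by
    have := step _ h1
    rwa [pair_smul, show aperm 0 = 2 by decide] at this
  have h3 : ({4, aperm (aperm k)} : Finset (Fin 6)) ∈ P := by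
    have := step _ h2
    rwa [pair_smul, show aperm 2 = 4 by decide] at this
  have finish : ∀ Q : Finset (Finset (Fin 6)), Q ⊆ P → Q.card = 3 → P = Q := by
    intro Q hQ hQc
    exact (Finset.eq_of_subset_of_card_le hQ (by rw [hcard, hQc])).symm
  have kcase : ∀ j : Fin 6, j = 0 ∨ j = 1 ∨ j = 2 ∨ j = 3 ∨ j = 4 ∨ j = 5 := by decide
  rcases kcase k with rfl | rfl | rfl | rfl | rfl | rfl
  · exact absurd rfl hk0
  · -- k = 1
    rw [show aperm 1 = 3 by decide] at h2
    rw [show aperm (aperm 1) = 5 by decide] at h3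
    left
    refine finish _ ?_ (by decide)
    intro q hq
    simp only [Finset.mem_insert, Finset.mem_singleton] at hq
    rcases hq with rfl | rfl | rfl
    · exact h1
    · exact h2
    · exact h3
  · -- k = 2 : contradiction
    rw [show aperm 2 = 4 by decide] at h2
    have hd := hdisj _ h1 _ h2 (by decide)
    exact absurd hd (by decide)
  · -- k = 3
    rw [show aperm 3 = 5 by decide] at h2
    rw [show aperm (aperm 3) = 1 by decide] at h3
    right; left
    refine finish _ ?_ (by decide)
    intro q hq
    simp only [Finset.mem_insert, Finset.mem_singleton] at hq
    rcases hq with rfl | rfl | rfl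
    · exact h1
    · rwa [show ({1,4} : Finset (Fin 6)) = {4,1} by decide]
    · exact h2
  · -- k = 4 : contradiction
    rw [show aperm 4 = 0 by decide] at h2
    have hd := hdisj _ h1 _ h2 (by decide)
    exact absurd hd (by decide)
  · -- k = 5
    rw [show aperm 5 = 1 by decide] at h2
    rw [show aperm (aperm 5) = 3 by decide] at h3
    right; right
    refine finish _ ?_ (by decide)
    intro q hq
    simp only [Finset.mem_insert, Finset.mem_singleton] at hq
    rcases hq with rfl | rfl | rfl
    · exact h1
    · rwa [show ({1,2} : Finset (Fin 6)) = {2,1} by decide]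
    · rwa [show ({3,4} : Finset (Fin 6)) = {4,3} by decide]

/-- `S̃₃` is isomorphic to `S₃` and fixes exactly the three partitions
`{{1,2},{3,4},{5,6}}`, `{{1,4},{2,5},{3,6}}`, `{{1,6},{2,3},{4,5}}` among the 15
partitions of `{1,...,6}` into three disjoint unordered pairs (0-indexed below). -/
theorem Stilde3_iso_and_fixed_partitions :
    Nonempty (Stilde3 ≃* Equiv.Perm (Fin 3)) ∧
      Finset.univ.filter (fun P : Finset (Finset (Fin 6)) =>
          IsPairPartition P ∧ ∀ σ ∈ Stilde3, σ • P = P) =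
        {{{0,1},{2,3},{4,5}}, {{0,3},{1,4},{2,5}}, {{0,5},{1,2},{3,4}}} := by
  refine ⟨⟨isoPart⟩, ?_⟩
  ext P
  simp only [Finset.mem_filter, Finset.mem_univ, true_and, Finset.mem_insert,
    Finset.mem_singleton]
  constructor
  · rintro ⟨hP, hinv⟩
    exact forward P hP hinv
  · rintro (rfl | rfl | rfl)
    · refine ⟨?_, fixed_of_gen _ (by decide) (by decide)⟩
      unfold IsPairPartition
      exact ⟨by decide, by decide, by decide, by decide⟩
    · refine ⟨?_, fixed_of_gen _ (by decide) (by decide)⟩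
      unfold IsPairPartition
      exact ⟨by decide, by decide, by decide, by decide⟩
    · refine ⟨?_, fixed_of_gen _ (by decide) (by decide)⟩
      unfold IsPairPartition
      exact ⟨by decide, by decide, by decide, by decide⟩
end

section
/- The group S̃_3 = ⟨(1 3 5)(2 4 6), (1 2)(3 6)(4 5)⟩ ≤ S_6 acts faithfully on each of the three partitions it fixes; in particular, its action permuting the three pairs of the partition {{1,2},{3,4},{5,6}} gives an isomorphism of S̃_3 onto the full symmetric group on those three pairs. -/
open scoped Pointwise

set_option maxRecDepth 4000

namespace StildeAux

abbrev a : Equiv.Perm (Fin 6) := c[0, 2, 4] * c[1, 3, 5]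
abbrev b : Equiv.Perm (Fin 6) := c[0, 1] * c[2, 5] * c[3, 4]

def F : Finset (Equiv.Perm (Fin 6)) := {1, a, a*a, b, a*b, a*a*b}

lemma Fmul : ∀ x ∈ F, ∀ y ∈ F, x * y ∈ F := by
  intro x hx y hy
  simp only [F, Finset.mem_insert, Finset.mem_singleton] at hx hy
  rcases hx with rfl|rfl|rfl|rfl|rfl|rfl <;> rcases hy with rfl|rfl|rfl|rfl|rfl|rfl <;> decide

lemma Finv : ∀ x ∈ F, x⁻¹ ∈ F := by
  intro x hx
  simp only [F, Finset.mem_insert, Finset.mem_singleton] at hx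
  rcases hx with rfl|rfl|rfl|rfl|rfl|rfl <;> decide

def S : Subgroup (Equiv.Perm (Fin 6)) where
  carrier := ↑F
  one_mem' := by simp [F]
  mul_mem' := fun hx hy => Fmul _ (Finset.mem_coe.mp hx) _ (Finset.mem_coe.mp hy)
  inv_mem' := fun hx => Finv _ (Finset.mem_coe.mp hx)

lemma mem_S_iff (x : Equiv.Perm (Fin 6)) : x ∈ S ↔ x ∈ F := Iff.rfl

lemma S_eq : Stilde3 = S := by
  apply le_antisymm
  · rw [Stilde3, Subgroup.closure_le]
    intro x hx
    simp only [Set.mem_insert_iff, Set.mem_singleton_iff] at hx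
    rcases hx with rfl | rfl <;> · show _ ∈ F; decide
  · intro x hx
    have ha : a ∈ Stilde3 := Subgroup.subset_closure (by left; rfl)
    have hb : b ∈ Stilde3 := Subgroup.subset_closure (by right; rfl)
    have hx' : x ∈ F := hx
    simp only [F, Finset.mem_insert, Finset.mem_singleton] at hx'
    rcases hx' with rfl | rfl | rfl | rfl | rfl | rfl
    · exact one_mem _
    · exact ha
    · exact mul_mem ha ha
    · exact hb
    · exact mul_mem ha hb
    · exact mul_mem (mul_mem ha ha) hb

lemma stab (P : Finset (Finset (Fin 6))) (h1 : a • P = P) (h2 : b • P = P) :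
    ∀ σ ∈ Stilde3, σ • P = P := by
  have hle : Stilde3 ≤ MulAction.stabilizer (Equiv.Perm (Fin 6)) P := by
    rw [Stilde3, Subgroup.closure_le]
    intro x hx
    simp only [Set.mem_insert_iff, Set.mem_singleton_iff] at hx
    rcases hx with rfl | rfl
    · exact h1
    · exact h2
  intro σ hσ
  exact hle hσ

def toBlocks (P : Finset (Finset (Fin 6)))
    (h : ∀ σ ∈ Stilde3, σ • P = P) :
    Stilde3 →* Equiv.Perm {q : Finset (Fin 6) // q ∈ P} where
  toFun σ :=
    { toFun := fun p => ⟨(σ : Equiv.Perm (Fin 6)) • (p : Finset (Fin 6)), by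
        have h2 : (σ : Equiv.Perm (Fin 6)) • (p : Finset (Fin 6)) ∈
            (σ : Equiv.Perm (Fin 6)) • P := Finset.smul_mem_smul_finset p.2
        rwa [h σ σ.2] at h2⟩
      invFun := fun p => ⟨(σ : Equiv.Perm (Fin 6))⁻¹ • (p : Finset (Fin 6)), by
        have h2 : (σ : Equiv.Perm (Fin 6))⁻¹ • (p : Finset (Fin 6)) ∈
            (σ : Equiv.Perm (Fin 6))⁻¹ • P := Finset.smul_mem_smul_finset p.2
        rwa [h _ (Stilde3.inv_mem σ.2)] at h2⟩
      left_inv := fun p => Subtype.ext (inv_smul_smul _ _)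
      right_inv := fun p => Subtype.ext (smul_inv_smul _ _) }
  map_one' := Equiv.ext fun p => Subtype.ext (by simp)
  map_mul' := fun σ τ => Equiv.ext fun p => Subtype.ext (by simp [mul_smul])

lemma toBlocks_apply (P : Finset (Finset (Fin 6))) (h : ∀ σ ∈ Stilde3, σ • P = P)
    (σ : Stilde3) (p : {q : Finset (Fin 6) // q ∈ P}) :
    ((toBlocks P h σ p : Finset (Fin 6))) =
      Finset.image (⇑(σ : Equiv.Perm (Fin 6))) (p : Finset (Fin 6)) := by
  show (σ : Equiv.Perm (Fin 6)) • (p : Finset (Fin 6)) = _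
  rw [Finset.smul_finset_def]
  rfl

lemma inj (P : Finset (Finset (Fin 6))) (h : ∀ σ ∈ Stilde3, σ • P = P)
    (hf : ∀ x ∈ F, (∀ p ∈ P, x • p = p) → x = 1) :
    Function.Injective (toBlocks P h) := by
  rw [injective_iff_map_eq_one]
  intro σ hσ
  have hx : (σ : Equiv.Perm (Fin 6)) ∈ F := S_eq.le σ.2
  apply Subtype.ext
  apply hf _ hx
  intro p hp
  have h2 := congrArg (fun e => ((e ⟨p, hp⟩ : {q : Finset (Fin 6) // q ∈ P}) :
      Finset (Fin 6))) hσ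
  simpa [toBlocks] using h2

lemma card_St : Nat.card Stilde3 = 6 := by
  rw [S_eq]
  have e : Nat.card S = Nat.card F :=
    Nat.card_congr (Equiv.subtypeEquivRight fun x => mem_S_iff x)
  rw [e, Nat.card_eq_finsetCard]
  decide

end StildeAux

open StildeAux in
/-- `S̃₃` acts faithfully on each of the three partitions it fixes: for each such
partition `P`, the induced homomorphism `S̃₃ → Sym(P)` (sending `σ` to the permutation
`p ↦ σ(p)` of the three pairs of `P`) is an isomorphism onto the full symmetric group
on the three pairs. -/
theorem Stilde3_acts_faithfully_on_fixed_partitions :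
    ∀ P ∈ ({{{0,1},{2,3},{4,5}}, {{0,3},{1,4},{2,5}}, {{0,5},{1,2},{3,4}}} :
        Finset (Finset (Finset (Fin 6)))),
      ∃ f : Stilde3 →* Equiv.Perm {q : Finset (Fin 6) // q ∈ P},
        (∀ (σ : Stilde3) (p : {q : Finset (Fin 6) // q ∈ P}),
          ((f σ p : Finset (Fin 6))) =
            Finset.image (⇑(σ : Equiv.Perm (Fin 6))) (p : Finset (Fin 6))) ∧
        Function.Bijective f := by
  intro P hP
  fin_cases hP <;>
  · refine ⟨toBlocks _ (stab _ (by decide) (by decide)), toBlocks_apply _ _, ?_⟩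
    rw [Nat.bijective_iff_injective_and_card]
    refine ⟨inj _ _ (fun x hx => by
      simp only [F, Finset.mem_insert, Finset.mem_singleton] at hx
      rcases hx with rfl|rfl|rfl|rfl|rfl|rfl <;> decide), ?_⟩
    rw [card_St, Nat.card_eq_fintype_card, Fintype.card_perm]
    rw [show Fintype.card {q : Finset (Fin 6) // q ∈ _} = 3 from by decide]
    rfl
end

section
/- Let k be a field of characteristic ≠ 2, 3, let b, c, s ∈ k with s^3 + bs + c ≠ 0. Define a = (s^4 − 2bs^2 − 8cs + b^2)/(4(s^3 + bs + c)), t_0 = (−s^4 − 6bs^2 − 4cs − b^2)/(4(s^3 + bs + c)), t_1 = (−s^3 + bs + 2c)/(2(s^3 + bs + c)), t_2 = (−3s^2 − b)/(2(s^3 + bs + c)). Then (t_2 r^2 + t_1 r + t_0)^2 = r^2 + a r + a^2 + b in the algebra k[r] = k[T]/(T^3 + bT + c). -/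
/-!
Reducing `(t₂ r² + t₁ r + t₀)²` modulo `r³ = -b r - c` leaves a quadratic in `r` whose
coefficients are quadratic forms in `t₀, t₁, t₂`; for the given values of `t₀, t₁, t₂, a`
they are `1`, `a` and `a² + b`, as clearing the denominator `4(s³ + bs + c)` shows.
-/

open Polynomial

theorem AdjoinRoot.root_cubic_eq_zero {k : Type*} [CommRing k] (b c : k) :
    root (X ^ 3 + C b * X + C c) ^ 3 + algebraMap k _ b * root (X ^ 3 + C b * X + C c)
      + algebraMap k _ c = 0 := by
  have h := mk_self (f := X ^ 3 + C b * X + C c)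
  simp only [map_add, map_mul, map_pow, mk_X, mk_C] at h
  exact h

theorem sq_quadratic_of_cubic_eq_zero {k A : Type*} [CommRing k] [CommRing A] [Algebra k A]
    {b c : k} {r : A}
    (hr : r ^ 3 + algebraMap k A b * r + algebraMap k A c = 0) (t₀ t₁ t₂ : k) :
    (algebraMap k A t₂ * r ^ 2 + algebraMap k A t₁ * r + algebraMap k A t₀) ^ 2 =
      algebraMap k A (t₁ ^ 2 + 2 * t₀ * t₂ - b * t₂ ^ 2) * r ^ 2
        + algebraMap k A (2 * t₀ * t₁ - c * t₂ ^ 2 - 2 * b * t₁ * t₂) * r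
        + algebraMap k A (t₀ ^ 2 - 2 * c * t₁ * t₂) := by
  simp only [map_add, map_sub, map_mul, map_pow, map_ofNat]
  linear_combination
    (algebraMap k A t₂ ^ 2 * r + 2 * algebraMap k A t₁ * algebraMap k A t₂) * hr

section

-- The denominator is abstracted as `d` so that `field_simp` treats it as an atom it can cancel.
variable {k : Type*} [Field k] {b c s d : k}

theorem sqrt_coeff_sq_eq_one (h2 : (2 : k) ≠ 0) (hd : s ^ 3 + b * s + c = d) (hd0 : d ≠ 0) :
    ((-s ^ 3 + b * s + 2 * c) / (2 * d)) ^ 2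
      + 2 * ((-s ^ 4 - 6 * b * s ^ 2 - 4 * c * s - b ^ 2) / (4 * d)) * ((-3 * s ^ 2 - b) / (2 * d))
      - b * ((-3 * s ^ 2 - b) / (2 * d)) ^ 2 = 1 := by
  have h4 : (4 : k) ≠ 0 := by simpa [show (4 : k) = 2 * 2 by norm_num] using h2
  field_simp
  rw [← hd]
  ring

theorem sqrt_coeff_linear_eq (h2 : (2 : k) ≠ 0) (hd : s ^ 3 + b * s + c = d) (hd0 : d ≠ 0) :
    2 * ((-s ^ 4 - 6 * b * s ^ 2 - 4 * c * s - b ^ 2) / (4 * d))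
        * ((-s ^ 3 + b * s + 2 * c) / (2 * d))
      - c * ((-3 * s ^ 2 - b) / (2 * d)) ^ 2
      - 2 * b * ((-s ^ 3 + b * s + 2 * c) / (2 * d)) * ((-3 * s ^ 2 - b) / (2 * d))
      = (s ^ 4 - 2 * b * s ^ 2 - 8 * c * s + b ^ 2) / (4 * d) := by
  have h4 : (4 : k) ≠ 0 := by simpa [show (4 : k) = 2 * 2 by norm_num] using h2
  field_simp
  rw [← hd]
  ring

theorem sqrt_coeff_const_eq (h2 : (2 : k) ≠ 0) (hd : s ^ 3 + b * s + c = d) (hd0 : d ≠ 0) :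
    ((-s ^ 4 - 6 * b * s ^ 2 - 4 * c * s - b ^ 2) / (4 * d)) ^ 2
      - 2 * c * ((-s ^ 3 + b * s + 2 * c) / (2 * d)) * ((-3 * s ^ 2 - b) / (2 * d))
      = ((s ^ 4 - 2 * b * s ^ 2 - 8 * c * s + b ^ 2) / (4 * d)) ^ 2 + b := by
  have h4 : (4 : k) ≠ 0 := by simpa [show (4 : k) = 2 * 2 by norm_num] using h2
  field_simp
  rw [← hd]
  ring

end

theorem parametrized_sqrt_in_cubic_algebra_general {k : Type*} [Field k]
    (h2 : (2 : k) ≠ 0) (b c s : k)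
    (hs : s ^ 3 + b * s + c ≠ 0)
    (a t₀ t₁ t₂ : k)
    (ha : a = (s ^ 4 - 2 * b * s ^ 2 - 8 * c * s + b ^ 2) / (4 * (s ^ 3 + b * s + c)))
    (ht₀ : t₀ = (-s ^ 4 - 6 * b * s ^ 2 - 4 * c * s - b ^ 2) / (4 * (s ^ 3 + b * s + c)))
    (ht₁ : t₁ = (-s ^ 3 + b * s + 2 * c) / (2 * (s ^ 3 + b * s + c)))
    (ht₂ : t₂ = (-3 * s ^ 2 - b) / (2 * (s ^ 3 + b * s + c))) :
    letI A := AdjoinRoot (X ^ 3 + C b * X + C c : k[X])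
    letI r : A := AdjoinRoot.root _
    (algebraMap k A t₂ * r ^ 2 + algebraMap k A t₁ * r + algebraMap k A t₀) ^ 2 =
      r ^ 2 + algebraMap k A a * r + algebraMap k A (a ^ 2 + b) := by
  obtain ⟨d, hd⟩ : ∃ d, s ^ 3 + b * s + c = d := ⟨_, rfl⟩
  rw [hd] at ha ht₀ ht₁ ht₂ hs
  subst ha ht₀ ht₁ ht₂
  rw [sq_quadratic_of_cubic_eq_zero (AdjoinRoot.root_cubic_eq_zero b c),
    sqrt_coeff_sq_eq_one h2 hd hs, sqrt_coeff_linear_eq h2 hd hs, sqrt_coeff_const_eq h2 hd hs,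
    map_one, one_mul]

/-- Explicit parametrization (by a parameter `s`) of square roots of `r² + ar + a² + b`
in the cubic algebra `A = k[T]/(T³ + bT + c)`: with
`a = (s⁴ − 2bs² − 8cs + b²)/(4(s³+bs+c))`,
`t₀ = (−s⁴ − 6bs² − 4cs − b²)/(4(s³+bs+c))`,
`t₁ = (−s³ + bs + 2c)/(2(s³+bs+c))`,
`t₂ = (−3s² − b)/(2(s³+bs+c))`,
one has `(t₂r² + t₁r + t₀)² = r² + ar + a² + b` in `A`. -/
theorem parametrized_sqrt_in_cubic_algebra {k : Type*} [Field k]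
    (h2 : (2 : k) ≠ 0) (h3 : (3 : k) ≠ 0) (b c s : k)
    (hs : s ^ 3 + b * s + c ≠ 0)
    (a t₀ t₁ t₂ : k)
    (ha : a = (s ^ 4 - 2 * b * s ^ 2 - 8 * c * s + b ^ 2) / (4 * (s ^ 3 + b * s + c)))
    (ht₀ : t₀ = (-s ^ 4 - 6 * b * s ^ 2 - 4 * c * s - b ^ 2) / (4 * (s ^ 3 + b * s + c)))
    (ht₁ : t₁ = (-s ^ 3 + b * s + 2 * c) / (2 * (s ^ 3 + b * s + c)))
    (ht₂ : t₂ = (-3 * s ^ 2 - b) / (2 * (s ^ 3 + b * s + c))) :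
    letI A := AdjoinRoot (X ^ 3 + C b * X + C c : k[X])
    letI r : A := AdjoinRoot.root _
    (algebraMap k A t₂ * r ^ 2 + algebraMap k A t₁ * r + algebraMap k A t₀) ^ 2 =
      r ^ 2 + algebraMap k A a * r + algebraMap k A (a ^ 2 + b) :=
  parametrized_sqrt_in_cubic_algebra_general h2 b c s hs a t₀ t₁ t₂ ha ht₀ ht₁ ht₂
end
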